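/- Let G be bipartite with perfect matching M and suppose L is a minimum-cardinality set of non-edges such that G + L is robust. Then the auxiliary digraph D(G + L, M) contains no shortcut arc arising from L; i.e., removing from L any edge whose corresponding arc is a shortcut preserves robustness, so by minimality no such arc exists. -/

import Mathlib

open SimpleGraph

variable {V : Type*}

/-- Two edges alternate with respect to the edge set `S`. -/
def altRel (S : Set (Sym2 V)) (e f : Sym2 V) : Prop := e ∈ S ↔ f ∉ S

/-- `c` is an `S`-alternating cycle: a cycle whose edges alternate between `S` and its
complement (including the wrap-around pair). -/
def IsAltCycle (G : SimpleGraph V) (S : Set (Sym2 V)) {v : V} (c : G.Walk v v) : Prop :=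
  c.IsCycle ∧ List.Chain' (altRel S) c.edges ∧
    ∀ e f, c.edges.head? = some e → c.edges.getLast? = some f → altRel S f e

/-- `G` admits a perfect matching. -/
def HasPM (G : SimpleGraph V) : Prop := ∃ M : G.Subgraph, M.IsPerfectMatching

/-- `G` admits a perfect matching after the deletion of any single edge. -/
def Robust (G : SimpleGraph V) : Prop := ∀ e ∈ G.edgeSet, HasPM (G.deleteEdges {e})

/-- `(U, W)` is a bipartition of `G`. -/
def IsBipartitionOf (G : SimpleGraph V) (U W : Set V) : Prop :=
  (∀ v, v ∈ U ↔ v ∉ W) ∧ ∀ ⦃a b⦄, G.Adj a b → (a ∈ U ↔ b ∈ W)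

/-- `M` is (the edge set of) a perfect matching of `G`. -/
def IsPMSet (G : SimpleGraph V) (M : Set (Sym2 V)) : Prop :=
  M ⊆ G.edgeSet ∧ ∀ v : V, ∃! e, e ∈ M ∧ v ∈ e

/-- The arcs of the auxiliary digraph `D(G, M)` on `U`. -/
def auxArc (G : SimpleGraph V) (M : Set (Sym2 V)) (U W : Set V) (u u' : V) : Prop :=
  u ∈ U ∧ u' ∈ U ∧ ∃ w ∈ W, s(u, w) ∈ M ∧ s(w, u') ∈ G.edgeSet ∧ s(w, u') ∉ M

/-- `e` is a non-edge of the bipartite graph `G` (an edge of its bipartite complement). -/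
def IsNonEdge (G : SimpleGraph V) (U W : Set V) (e : Sym2 V) : Prop :=
  ∃ u ∈ U, ∃ w ∈ W, e = s(u, w) ∧ ¬ G.Adj u w

/-! Write `M` as an involution `μ`. For `x ∈ U`, the graph `H - xμ(x)` has a perfect matching iff
`x` lies on a directed cycle of `D(H, M)`: another perfect matching `ν` avoiding `xμ(x)` makes
`ν ∘ μ` trace such a cycle, and conversely rotating `M` along a cycle through `x` gives a perfect
matching avoiding `xμ(x)`. Hence `H` is robust iff every vertex of `U` lies on a cycle of `D(H, M)`.
Removing the edge `u'w` of `L` deletes only the arc `u → u'` from `D(G + L, M)`, and a shortcut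
replaces that arc by a path, so every cycle survives: `G + (L - u'w)` is still robust, against the
minimality of `L`. -/

open Function Relation

theorem Set.InjOn.exists_perm_rotate {α : Type*} {m : ℕ} {c : ℕ → α}
    (hc : Set.InjOn c (Set.Iic m)) :
    ∃ π : Equiv.Perm α, (∀ i < m, π (c i) = c (i + 1)) ∧ π (c m) = c 0 ∧
      ∀ z ∉ c '' Set.Iic m, π z = z := by
  let e : Fin (m + 1) ↪ α := ⟨fun i => c i, fun i j h => Fin.ext (hc i.is_le j.is_le h)⟩
  refine ⟨(finRotate (m + 1)).viaEmbedding e, fun i hi => ?_, ?_, fun z hz => ?_⟩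
  · exact ((finRotate _).viaEmbedding_apply e ⟨i, by omega⟩).trans
      (congrArg e (finRotate_of_lt hi))
  · exact ((finRotate _).viaEmbedding_apply e (Fin.last m)).trans (congrArg e finRotate_last)
  · refine Equiv.Perm.viaEmbedding_apply_of_notMem _ _ _ ?_
    rintro ⟨i, rfl⟩
    exact hz ⟨i, Nat.lt_succ_iff.1 i.2, rfl⟩

namespace Relation

variable {α : Type*} {r : α → α → Prop} {x y : α}

theorem transGen_self_of_injective [Finite α] {f : α → α} (hf : Injective f) {p : α → Prop}
    (hp : ∀ z, p z → r z (f z) ∧ p (f z)) (hx : p x) : TransGen r x x := by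
  have hpf : ∀ n, p (f^[n] x) := by
    intro n
    induction n with
    | zero => exact hx
    | succ n ih => rw [iterate_succ_apply']; exact (hp _ ih).2
  have hpath : ∀ n, TransGen r x (f^[n + 1] x) := by
    intro n
    induction n with
    | zero => exact .single (hp x hx).1
    | succ n ih => rw [iterate_succ_apply' f (n + 1)]; exact ih.tail (hp _ (hpf _)).1
  obtain ⟨n, hn, hper⟩ := mem_periodicPts.1 (hf.mem_periodicPts x)
  obtain ⟨m, rfl⟩ : ∃ m, n = m + 1 := ⟨n - 1, by omega⟩
  simpa only [hper.eq] using hpath m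

theorem ReflTransGen.exists_injOn_chain (h : ReflTransGen r x y) :
    ∃ m, ∃ c : ℕ → α, c 0 = x ∧ c m = y ∧ Set.InjOn c (Set.Iic m) ∧
      ∀ i < m, r (c i) (c (i + 1)) := by
  induction h with
  | refl => exact ⟨0, fun _ => x, rfl, rfl, fun i hi j hj _ => by simp_all, by simp⟩
  | @tail b d _ hbd ih =>
    obtain ⟨m, c, hc0, hcm, hinj, hc⟩ := ih
    by_cases hd : ∃ k ≤ m, c k = d
    · obtain ⟨k, hk, rfl⟩ := hd
      exact ⟨k, c, hc0, rfl, hinj.mono (Set.Iic_subset_Iic.2 hk), fun i hi => hc i (by omega)⟩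
    · have hupd : ∀ i ≤ m, update c (m + 1) d i = c i := fun i hi => update_of_ne (by omega) _ _
      refine ⟨m + 1, update c (m + 1) d, by simp [hc0], by simp, ?_, fun i hi => ?_⟩
      · intro i hi j hj hij
        simp only [Set.mem_Iic] at hi hj
        rcases hi.lt_or_eq with hi | rfl <;> rcases hj.lt_or_eq with hj | rfl
        · rw [hupd i (by omega), hupd j (by omega)] at hij
          exact hinj (Set.mem_Iic.2 (by omega)) (Set.mem_Iic.2 (by omega)) hij
        · simp only [hupd i (by omega), update_self] at hij
          exact (hd ⟨i, by omega, hij⟩).elim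
        · simp only [hupd j (by omega), update_self] at hij
          exact (hd ⟨j, by omega, hij.symm⟩).elim
        · rfl
      · rcases (Nat.lt_succ_iff.1 hi).lt_or_eq with hi | rfl
        · rw [hupd i (by omega), hupd (i + 1) (by omega)]
          exact hc i hi
        · rw [hupd i le_rfl, update_self, hcm]
          exact hbd

theorem TransGen.exists_perm (hirr : ∀ a, ¬ r a a) (h : TransGen r x x) :
    ∃ π : Equiv.Perm α, π x ≠ x ∧ ∀ z, π z ≠ z → r z (π z) := by
  obtain ⟨y, hxy, hyx⟩ := tail'_iff.1 h
  obtain ⟨m, c, hc0, hcm, hinj, hc⟩ := hxy.exists_injOn_chain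
  obtain ⟨π, hπ, hπm, hπfix⟩ := hinj.exists_perm_rotate
  have hπr : ∀ z ∈ c '' Set.Iic m, r z (π z) := by
    rintro _ ⟨i, hi, rfl⟩
    rcases (Set.mem_Iic.1 hi).lt_or_eq with hi | rfl
    · rw [hπ i hi]; exact hc i hi
    · rw [hπm, hc0, hcm]; exact hyx
  refine ⟨π, fun hx => hirr x ?_, fun z hz => hπr z (by_contra fun h => hz (hπfix z h))⟩
  simpa only [hx] using hπr x ⟨0, Set.mem_Iic.2 (Nat.zero_le m), hc0⟩

end Relation

section Matching

variable {G H : SimpleGraph V} {U W : Set V} {μ : V → V}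

theorem hasPM_iff_exists_involutive :
    HasPM G ↔ ∃ σ : V → V, Involutive σ ∧ ∀ v, G.Adj v (σ v) := by
  constructor
  · rintro ⟨M, hM⟩
    choose σ hσ hσu using Subgraph.isPerfectMatching_iff.1 hM
    exact ⟨σ, fun v => (hσu _ _ (hσ v).symm).symm, fun v => M.adj_sub (hσ v)⟩
  · rintro ⟨σ, hσ, hadj⟩
    refine ⟨{ verts := Set.univ
              Adj := fun a b => b = σ a
              adj_sub := fun h => h ▸ hadj _
              edge_vert := fun _ => Set.mem_univ _
              symm := ⟨fun a _ h => h ▸ (hσ a).symm⟩ },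
      Subgraph.isPerfectMatching_iff.2 fun v => ⟨σ v, rfl, fun _ hw => hw⟩⟩

theorem hasPM_deleteEdges_iff {x y : V} :
    HasPM (G.deleteEdges {s(x, y)}) ↔
      ∃ σ : V → V, Involutive σ ∧ (∀ v, G.Adj v (σ v)) ∧ σ x ≠ y := by
  simp only [hasPM_iff_exists_involutive, deleteEdges_adj, Set.mem_singleton_iff]
  refine exists_congr fun σ => and_congr_right fun hσ => ⟨fun h => ?_, fun ⟨hadj, hx⟩ v => ?_⟩
  · exact ⟨fun v => (h v).1, fun hxy => (h x).2 (hxy ▸ rfl)⟩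
  · refine ⟨hadj v, fun h => hx ?_⟩
    rcases Sym2.eq_iff.1 h with ⟨rfl, rfl⟩ | ⟨rfl, rfl⟩
    · rfl
    · exact hσ v

theorem IsPMSet.exists_involutive {M : Set (Sym2 V)} (hM : IsPMSet G M) :
    ∃ μ : V → V, Involutive μ ∧ (∀ v, G.Adj v (μ v)) ∧ ∀ a b, s(a, b) ∈ M ↔ b = μ a := by
  have hpartner : ∀ a, ∃ b, s(a, b) ∈ M := fun a => by
    obtain ⟨e, ⟨he, hae⟩, -⟩ := hM.2 a
    obtain ⟨b, rfl⟩ := Sym2.mem_iff_exists.1 hae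
    exact ⟨b, he⟩
  choose μ hμ using hpartner
  have hmem : ∀ a b, s(a, b) ∈ M ↔ b = μ a := fun a b =>
    ⟨fun h => Sym2.congr_right.1
      ((hM.2 a).unique ⟨h, Sym2.mem_mk_left a b⟩ ⟨hμ a, Sym2.mem_mk_left a _⟩), fun h => h ▸ hμ a⟩
  refine ⟨μ, fun a => ((hmem _ _).1 ?_).symm, fun a => hM.1 (hμ a), hmem⟩
  rw [Sym2.eq_swap]
  exact hμ a

theorem IsBipartitionOf.mem_iff_notMem (hbip : IsBipartitionOf G U W) {a b : V} (h : G.Adj a b) :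
    a ∈ U ↔ b ∉ U :=
  (hbip.2 h).trans (by rw [hbip.1 b, not_not])

theorem isBipartitionOf_sup (hbip : IsBipartitionOf G U W) {s : Set (Sym2 V)}
    (hs : ∀ e ∈ s, IsNonEdge G U W e) : IsBipartitionOf (G ⊔ fromEdgeSet s) U W := by
  refine ⟨hbip.1, fun a b hab => ?_⟩
  rcases hab with hab | ⟨hmem, -⟩
  · exact hbip.2 hab
  · obtain ⟨p, hp, q, hq, heq, -⟩ := hs _ hmem
    rcases Sym2.eq_iff.1 heq with ⟨rfl, rfl⟩ | ⟨rfl, rfl⟩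
    · exact iff_of_true hp hq
    · exact iff_of_false ((hbip.1 a).1 · hq) ((hbip.1 b).1 hp)

theorem adj_sup_fromEdgeSet_sdiff {s : Set (Sym2 V)} {e : Sym2 V} {a b : V}
    (h : (G ⊔ fromEdgeSet s).Adj a b) (he : s(a, b) ≠ e) :
    (G ⊔ fromEdgeSet (s \ {e})).Adj a b := by
  simp_all [fromEdgeSet_adj]

/-- The arcs of the auxiliary digraph `D(H, M)`, with `M` given by its partner function `μ`. -/
def matchingArc (H : SimpleGraph V) (μ : V → V) (U : Set V) (u u' : V) : Prop :=
  u ∈ U ∧ u' ∈ U ∧ u' ≠ u ∧ H.Adj (μ u) u'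

theorem auxArc_iff_matchingArc {M : Set (Sym2 V)} (hbip : IsBipartitionOf H U W)
    (hμ : Involutive μ) (hadj : ∀ v, H.Adj v (μ v)) (hM : ∀ a b, s(a, b) ∈ M ↔ b = μ a)
    {u u' : V} : auxArc H M U W u u' ↔ matchingArc H μ U u u' := by
  constructor
  · rintro ⟨hu, hu', w, -, huw, hwu', hwu'M⟩
    obtain rfl := (hM u w).1 huw
    exact ⟨hu, hu', fun h => hwu'M ((hM _ _).2 (h ▸ (hμ u).symm)), hwu'⟩
  · rintro ⟨hu, hu', hne, hadj'⟩
    exact ⟨hu, hu', μ u, (hbip.2 (hadj u)).1 hu, (hM _ _).2 rfl, hadj',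
      fun h => hne (((hM _ _).1 h).trans (hμ u))⟩

theorem matchingArc_sup_fromEdgeSet_sdiff (hμU : ∀ a ∈ U, μ a ∉ U) (hμ : Injective μ)
    {s : Set (Sym2 V)} {u u' a b : V} (hu' : u' ∈ U)
    (h : matchingArc (G ⊔ fromEdgeSet s) μ U a b) (hab : ¬(a = u ∧ b = u')) :
    matchingArc (G ⊔ fromEdgeSet (s \ {s(u', μ u)})) μ U a b := by
  obtain ⟨ha, hb, hne, hadj⟩ := h
  refine ⟨ha, hb, hne, adj_sup_fromEdgeSet_sdiff hadj fun heq => ?_⟩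
  rcases Sym2.eq_iff.1 heq with ⟨h1, -⟩ | ⟨h1, h2⟩
  · exact hμU a ha (h1 ▸ hu')
  · exact hab ⟨hμ h1, h2⟩

theorem matchingArc_le_transGen_sdiff_of_shortcut (hμU : ∀ a ∈ U, μ a ∉ U) (hμ : Injective μ)
    {s : Set (Sym2 V)} {u u' : V} (hu' : u' ∈ U)
    (hshortcut : TransGen
      (fun a b => matchingArc (G ⊔ fromEdgeSet s) μ U a b ∧ ¬(a = u ∧ b = u')) u u') :
    matchingArc (G ⊔ fromEdgeSet s) μ U ≤
      TransGen (matchingArc (G ⊔ fromEdgeSet (s \ {s(u', μ u)})) μ U) := by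
  intro a b h
  by_cases hab : a = u ∧ b = u'
  · obtain ⟨rfl, rfl⟩ := hab
    exact TransGen.mono (fun p q ⟨hpq, hne⟩ =>
      matchingArc_sup_fromEdgeSet_sdiff hμU hμ hu' hpq hne) _ _ hshortcut
  · exact .single (matchingArc_sup_fromEdgeSet_sdiff hμU hμ hu' h hab)

variable (hbip : IsBipartitionOf H U W) (hμ : Involutive μ) (hadj : ∀ v, H.Adj v (μ v))
include hbip hμ hadj

theorem transGen_matchingArc_of_hasPM [Finite V] {x : V} (hx : x ∈ U)
    (h : HasPM (H.deleteEdges {s(x, μ x)})) : TransGen (matchingArc H μ U) x x := by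
  obtain ⟨ν, hν, hνadj, hνx⟩ := hasPM_deleteEdges_iff.1 h
  refine transGen_self_of_injective (hν.injective.comp hμ.injective)
    (p := fun z => z ∈ U ∧ ν z ≠ μ z) (fun z ⟨hz, hzν⟩ => ?_) ⟨hx, hνx⟩
  have hμz : μ z ∉ U := (hbip.mem_iff_notMem (hadj z)).1 hz
  have hνμz : ν (μ z) ∈ U := (hbip.mem_iff_notMem (hνadj (μ z)).symm).2 hμz
  have hne : ν (μ z) ≠ z := fun h => hzν (by rw [← hν (μ z), h])
  refine ⟨⟨hz, hνμz, hne, hνadj _⟩, hνμz, ?_⟩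
  show ν (ν (μ z)) ≠ μ (ν (μ z))
  rw [hν]
  exact fun h => hne (hμ.injective h).symm

theorem hasPM_deleteEdges_of_perm {π : Equiv.Perm V}
    (hπ : ∀ z, π z ≠ z → matchingArc H μ U z (π z)) {x : V} (hπx : π x ≠ x) :
    HasPM (H.deleteEdges {s(x, μ x)}) := by
  classical
  have hμU : ∀ v, μ v ∈ U ↔ v ∉ U := fun v => hbip.mem_iff_notMem (hadj v).symm
  have hπU : ∀ z, π z ∈ U ↔ z ∈ U := fun z => by
    by_cases hz : π z = z
    · rw [hz]
    · exact iff_of_true (hπ z hz).2.1 (hπ z hz).1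
  have hπadj : ∀ z, H.Adj (μ z) (π z) := fun z => by
    by_cases hz : π z = z
    · rw [hz]; exact (hadj z).symm
    · exact (hπ z hz).2.2.2
  -- the new matching joins `μ z` to `π z`
  let σ : V → V := fun v => if v ∈ U then μ (π.symm v) else π (μ v)
  have hσU : ∀ v ∈ U, σ v = μ (π.symm v) := fun v hv => if_pos hv
  have hσW : ∀ v ∉ U, σ v = π (μ v) := fun v hv => if_neg hv
  refine hasPM_deleteEdges_iff.2 ⟨σ, fun v => ?_, fun v => ?_, ?_⟩
  · by_cases hv : v ∈ U
    · have : π.symm v ∈ U := by rwa [← hπU, Equiv.apply_symm_apply]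
      rw [hσU v hv, hσW _ fun h => (hμU _).1 h this, hμ, Equiv.apply_symm_apply]
    · have : π (μ v) ∈ U := (hπU _).2 ((hμU v).2 hv)
      rw [hσW v hv, hσU _ this, Equiv.symm_apply_apply, hμ]
  · by_cases hv : v ∈ U
    · rw [hσU v hv]; simpa using (hπadj (π.symm v)).symm
    · rw [hσW v hv]; simpa only [hμ v] using hπadj (μ v)
  · rw [hσU x (hπ x hπx).1]
    exact fun h => hπx ((Equiv.symm_apply_eq π).1 (hμ.injective h)).symm

theorem hasPM_deleteEdges_iff_transGen [Finite V] {x : V} (hx : x ∈ U) :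
    HasPM (H.deleteEdges {s(x, μ x)}) ↔ TransGen (matchingArc H μ U) x x := by
  refine ⟨transGen_matchingArc_of_hasPM hbip hμ hadj hx, fun h => ?_⟩
  obtain ⟨π, hπx, hπ⟩ := h.exists_perm fun u hu => hu.2.2.1 rfl
  exact hasPM_deleteEdges_of_perm hbip hμ hadj hπ hπx

theorem robust_iff_forall_transGen [Finite V] :
    Robust H ↔ ∀ x ∈ U, TransGen (matchingArc H μ U) x x := by
  refine ⟨fun hrob x hx => (hasPM_deleteEdges_iff_transGen hbip hμ hadj hx).1 (hrob _ (hadj x)),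
    fun h e _ => ?_⟩
  induction e using Sym2.ind with | _ a b => ?_
  by_cases hb : b = μ a
  · subst hb
    by_cases ha : a ∈ U
    · exact (hasPM_deleteEdges_iff_transGen hbip hμ hadj ha).2 (h a ha)
    · have hμa : μ a ∈ U := (hbip.mem_iff_notMem (hadj a).symm).2 ha
      have hswap : s(a, μ a) = s(μ a, μ (μ a)) := by rw [hμ a, Sym2.eq_swap]
      rw [hswap]
      exact (hasPM_deleteEdges_iff_transGen hbip hμ hadj hμa).2 (h _ hμa)
  · exact hasPM_deleteEdges_iff.2 ⟨μ, hμ, hadj, Ne.symm hb⟩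

end Matching

theorem optimal_solution_has_no_shortcut_general
    {V : Type*} [Fintype V] (G : SimpleGraph V) (U W : Set V)
    (hbip : IsBipartitionOf G U W) (M : Set (Sym2 V)) (hM : IsPMSet G M)
    (L : Finset (Sym2 V)) (hL : ∀ e ∈ L, IsNonEdge G U W e)
    (hrob : Robust (G ⊔ SimpleGraph.fromEdgeSet ↑L))
    (hopt : ∀ L₂ : Finset (Sym2 V), (∀ e ∈ L₂, IsNonEdge G U W e) →
      Robust (G ⊔ SimpleGraph.fromEdgeSet ↑L₂) → L.card ≤ L₂.card) :
    ∀ e ∈ L, ∀ w ∈ W, ∀ u' ∈ U, e = s(u', w) → ∀ u : V, s(u, w) ∈ M →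
      ¬ Relation.TransGen
          (fun a b => auxArc (G ⊔ SimpleGraph.fromEdgeSet ↑L) M U W a b ∧ ¬ (a = u ∧ b = u'))
          u u' := by
  classical
  rintro e he w - u' hu' rfl u huw hpath
  obtain ⟨μ, hμ, hadj, hM⟩ := hM.exists_involutive
  obtain rfl : w = μ u := (hM u w).1 huw
  have hL' : ∀ f ∈ L.erase s(u', μ u), IsNonEdge G U W f :=
    fun f hf => hL f (Finset.mem_of_mem_erase hf)
  have hadjL : ∀ (s : Set (Sym2 V)) v, (G ⊔ fromEdgeSet s).Adj v (μ v) := fun _ v => .inl (hadj v)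
  have hbipL := isBipartitionOf_sup hbip hL
  have hbypass := matchingArc_le_transGen_sdiff_of_shortcut
    (fun a => (hbip.mem_iff_notMem (hadj a)).1) hμ.injective hu'
    (TransGen.mono (fun a b ⟨h, hab⟩ =>
      ⟨(auxArc_iff_matchingArc hbipL hμ (hadjL _) hM).1 h, hab⟩) _ _ hpath)
  rw [← Finset.coe_erase] at hbypass
  have hrob' : Robust (G ⊔ fromEdgeSet ↑(L.erase s(u', μ u))) :=
    (robust_iff_forall_transGen (isBipartitionOf_sup hbip hL') hμ (hadjL _)).2 fun x hx =>
      TransGen.closed hbypass _ _ ((robust_iff_forall_transGen hbipL hμ (hadjL _)).1 hrob x hx)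
  exact (Finset.card_erase_lt_of_mem he).not_ge (hopt _ hL' hrob')

/-- If `L` is a minimum-cardinality set of non-edges making `G` robust, then no arc of
`D(G + L, M)` arising from an edge of `L` is a shortcut: for `s(w, u') ∈ L` with
`M`-partner `u` of `w`, there is no directed `u`-`u'`-path avoiding the arc `u → u'`. -/
theorem optimal_solution_has_no_shortcut
    {V : Type*} [Fintype V] [DecidableEq V] (G : SimpleGraph V) (U W : Set V)
    (hbip : IsBipartitionOf G U W) (M : Set (Sym2 V)) (hM : IsPMSet G M)
    (L : Finset (Sym2 V)) (hL : ∀ e ∈ L, IsNonEdge G U W e)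
    (hrob : Robust (G ⊔ SimpleGraph.fromEdgeSet ↑L))
    (hopt : ∀ L₂ : Finset (Sym2 V), (∀ e ∈ L₂, IsNonEdge G U W e) →
      Robust (G ⊔ SimpleGraph.fromEdgeSet ↑L₂) → L.card ≤ L₂.card) :
    ∀ e ∈ L, ∀ w ∈ W, ∀ u' ∈ U, e = s(u', w) → ∀ u : V, s(u, w) ∈ M →
      ¬ Relation.TransGen
          (fun a b => auxArc (G ⊔ SimpleGraph.fromEdgeSet ↑L) M U W a b ∧ ¬ (a = u ∧ b = u'))
          u u' :=
  optimal_solution_has_no_shortcut_general G U W hbip M hM L hL hrob hopt
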